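/- (Andersen–Hoffman's Theorem) Let r ≤ n and let d = (d_1,…,d_n) be nonnegative integers with Σ_{ℓ∈[n]} d_ℓ = n−r. An r×r symmetric latin rectangle L on the symbol set [n] can be extended to an n×n symmetric latin square on [n] with prescribed diagonal tail d if and only if: (i) e_ℓ ≥ 2r−n+d_ℓ for every ℓ ∈ [n]; and (ii) e_ℓ + d_ℓ ≡ n (mod 2) for every ℓ ∈ [n]. -/

import Mathlib

open Finset

/-- Number of occurrences of the symbol `ℓ` in the `m × m` array `A` (symbols in `Fin k`). -/
def occ {m k : ℕ} (A : Fin m → Fin m → Fin k) (ℓ : Fin k) : ℕ :=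
  (Finset.univ.filter fun p : Fin m × Fin m => A p.1 p.2 = ℓ).card

/-- `A` is a symmetric latin square of order `n` on the symbol set `Fin n`:
each symbol occurs exactly once in each row and in each column, and `A` is symmetric. -/
def IsSymLS {n : ℕ} (A : Fin n → Fin n → Fin n) : Prop :=
  (∀ i, Function.Bijective (A i)) ∧
  (∀ j, Function.Bijective fun i => A i j) ∧
  (∀ i j, A i j = A j i)

/-- `L` is an `r × r` symmetric latin rectangle on the symbol set `Fin n`:
each symbol occurs at most once in each row and in each column, and `L` is symmetric. -/
def IsSymLatinRect {r n : ℕ} (L : Fin r → Fin r → Fin n) : Prop :=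
  (∀ i, Function.Injective (L i)) ∧
  (∀ j, Function.Injective fun i => L i j) ∧
  (∀ i j, L i j = L j i)

/-- `A` extends `L`: `L` is the top-left `r × r` subarray of `A`. -/
def Extends {r n : ℕ} (h : r ≤ n) (L : Fin r → Fin r → Fin n)
    (A : Fin n → Fin n → Fin n) : Prop :=
  ∀ i j : Fin r, A (Fin.castLE h i) (Fin.castLE h j) = L i j

/-- The number of diagonal cells `A i i` with `i` beyond the first `r` rows holding symbol `ℓ`. -/
def diagTail {n : ℕ} (r : ℕ) (A : Fin n → Fin n → Fin n) (ℓ : Fin n) : ℕ :=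
  (Finset.univ.filter fun i : Fin n => r ≤ (i : ℕ) ∧ A i i = ℓ).card

/-!
Necessity: in a symmetric latin square every symbol `ℓ` occurs once per row, so counting `ℓ` in the
four blocks cut out by the first `r` rows and columns shows that the lower-right block contains
`ℓ` exactly `n - 2r + e_ℓ` times. That block contains the `d_ℓ` diagonal occurrences, and by
symmetry its off-diagonal occurrences pair up, which gives both (i) and (ii).

Sufficiency, by induction on `n - r`: pick `s` with `d_s > 0` and border `L` by a new row and
column `x` with `s` on the diagonal. Conditions (i) and (ii) persist when `x` avoids `s`,
repeats nothing in its row or column, and contains every symbol `ℓ ≠ s` for which (i) is an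
equality. Such an `x` exists by Hall's theorem, padding the `r` positions with `n - r - 1` dummy
positions that may take any symbol but `s` and the tight ones; the Hall condition is a double
count of the bipartite graph "symbol `ℓ` is missing from row `j`", in which every row has degree
`n - r` and symbol `ℓ` has degree `r - e_ℓ ≤ n - r - d_ℓ`.
-/
lemma sum_card_filter_le_sum_card_filter {α β : Type*} [Fintype α] [Fintype β]
    (R : α → β → Prop) [∀ a b, Decidable (R a b)] {s : Finset α} {t : Finset β}
    (h : ∀ a ∈ s, ∀ b, R a b → b ∈ t) :
    ∑ a ∈ s, #{b | R a b} ≤ ∑ b ∈ t, #{a | R a b} :=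
  calc ∑ a ∈ s, #{b | R a b} = ∑ a ∈ s, #(t.bipartiteAbove R a) :=
        sum_congr rfl fun a ha => congrArg card <| by
          ext b; simpa [bipartiteAbove] using h a ha b
    _ = ∑ b ∈ t, #(s.bipartiteBelow R b) := sum_card_bipartiteAbove_eq_sum_card_bipartiteBelow R
    _ ≤ ∑ b ∈ t, #{a | R a b} :=
        sum_le_sum fun _ _ => card_le_card (filter_subset_filter _ (subset_univ s))

lemma sum_sum_mod_two_eq_sum_diag {α : Type*} (s : Finset α) (f : α → α → ℕ)
    (hf : ∀ i j, f i j = f j i) :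
    (∑ i ∈ s, ∑ j ∈ s, f i j) % 2 = (∑ i ∈ s, f i i) % 2 := by
  classical
  induction s using Finset.induction_on with
  | empty => simp
  | insert a s ha ih =>
    have hswap : ∑ i ∈ s, f i a = ∑ j ∈ s, f a j := sum_congr rfl fun i _ => hf i a
    simp only [sum_insert ha, sum_add_distrib, hswap]
    omega

lemma occ_eq_sum_sum {m k : ℕ} (A : Fin m → Fin m → Fin k) (ℓ : Fin k) :
    occ A ℓ = ∑ i, ∑ j, if A i j = ℓ then 1 else 0 := by
  rw [occ, card_filter, ← univ_product_univ, sum_product]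

lemma sum_ite_eq_one_of_bijective {m k : ℕ} {f : Fin m → Fin k} (hf : Function.Bijective f)
    (ℓ : Fin k) : (∑ j, if f j = ℓ then 1 else 0) = 1 := by
  rw [hf.sum_comp (fun a => if a = ℓ then 1 else 0), sum_ite_eq' univ ℓ, if_pos (mem_univ ℓ)]

namespace IsSymLS

variable {n : ℕ} {A : Fin n → Fin n → Fin n}

/-- Each row holds `ℓ` once, and the blocks `I × Iᶜ` and `Iᶜ × I` hold it equally often by
symmetry. -/
lemma sum_compl_block_add_two_mul_card (hA : IsSymLS A) (I : Finset (Fin n)) (ℓ : Fin n) :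
    (∑ i ∈ Iᶜ, ∑ j ∈ Iᶜ, if A i j = ℓ then 1 else 0) + 2 * #I
      = n + ∑ i ∈ I, ∑ j ∈ I, if A i j = ℓ then 1 else 0 := by
  have hrows : ∀ J : Finset (Fin n), (∑ i ∈ J, ∑ j ∈ I, if A i j = ℓ then 1 else 0)
      + (∑ i ∈ J, ∑ j ∈ Iᶜ, if A i j = ℓ then 1 else 0) = #J := fun J => by
    rw [← sum_add_distrib]
    simp only [sum_add_sum_compl, sum_ite_eq_one_of_bijective (hA.1 _), sum_const, smul_eq_mul,
      mul_one]
  have hswap : (∑ i ∈ Iᶜ, ∑ j ∈ I, if A i j = ℓ then 1 else 0)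
      = ∑ i ∈ I, ∑ j ∈ Iᶜ, if A i j = ℓ then 1 else 0 := by
    rw [sum_comm]; simp only [hA.2.2]
  have hI := hrows I
  have hIc := hrows Iᶜ
  rw [card_compl, Fintype.card_fin] at hIc
  have := card_le_univ I
  rw [Fintype.card_fin] at this
  omega

end IsSymLS

lemma mem_map_castLEEmb {r n : ℕ} (h : r ≤ n) (i : Fin n) :
    i ∈ univ.map (Fin.castLEEmb h) ↔ (i : ℕ) < r := by
  simp only [mem_map, mem_univ, true_and, Fin.castLEEmb_apply]
  exact ⟨fun ⟨j, hj⟩ => hj ▸ j.isLt, fun hi => ⟨⟨i, hi⟩, rfl⟩⟩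

theorem IsSymLS.conditions_of_extends {n r : ℕ} (hrn : r ≤ n) {L : Fin r → Fin r → Fin n}
    {A : Fin n → Fin n → Fin n} (hA : IsSymLS A) (hext : Extends hrn L A) (ℓ : Fin n) :
    2 * r + diagTail r A ℓ ≤ occ L ℓ + n ∧ (occ L ℓ + diagTail r A ℓ) % 2 = n % 2 := by
  set I := univ.map (Fin.castLEEmb hrn)
  have hblock := hA.sum_compl_block_add_two_mul_card I ℓ
  have hI : #I = r := by simp [I]
  have hocc : occ L ℓ = ∑ i ∈ I, ∑ j ∈ I, if A i j = ℓ then 1 else 0 := by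
    simp only [occ_eq_sum_sum, I, sum_map, Fin.castLEEmb_apply, hext _ _]
  have htail : diagTail r A ℓ = ∑ i ∈ Iᶜ, if A i i = ℓ then 1 else 0 := by
    rw [diagTail, ← card_filter]
    congr 1; ext i
    simp only [mem_filter, mem_univ, true_and, mem_compl, I, mem_map_castLEEmb, not_lt]
  have hdiag_le : (∑ i ∈ Iᶜ, if A i i = ℓ then 1 else 0)
      ≤ ∑ i ∈ Iᶜ, ∑ j ∈ Iᶜ, if A i j = ℓ then 1 else 0 :=
    sum_le_sum fun i hi => single_le_sum (f := fun j => if A i j = ℓ then 1 else 0)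
      (fun _ _ => Nat.zero_le _) hi
  have hparity := sum_sum_mod_two_eq_sum_diag Iᶜ (fun i j => if A i j = ℓ then 1 else 0)
    fun i j => by rw [hA.2.2]
  omega

namespace IsSymLatinRect

variable {r n : ℕ} {L : Fin r → Fin r → Fin n}

lemma card_missing_from_row (hL : IsSymLatinRect L) (j : Fin r) :
    #{ℓ | ℓ ∉ univ.image (L j)} = n - r := by
  rw [filter_not, filter_mem_eq_inter, univ_inter, ← compl_eq_univ_sdiff, card_compl,
    card_image_of_injective _ (hL.1 j), card_univ, Fintype.card_fin, Fintype.card_fin]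

lemma card_rows_missing_add_occ (hL : IsSymLatinRect L) (ℓ : Fin n) :
    #{j | ℓ ∉ univ.image (L j)} + occ L ℓ = r := by
  have hrow : ∀ j, (∑ i, if L j i = ℓ then 1 else 0) = if ℓ ∈ univ.image (L j) then 1 else 0 :=
    fun j => by
      rw [← sum_image (f := fun a => if a = ℓ then 1 else 0) fun a _ b _ h => hL.1 j h,
        sum_ite_eq']
  rw [occ_eq_sum_sum, sum_congr rfl fun j _ => hrow j, ← card_filter, add_comm,
    card_filter_add_card_filter_not, card_univ, Fintype.card_fin]

end IsSymLatinRect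

/-- The symbols that may be appended to row `j` (and column `j`) of `L` when `s` is placed in the
new diagonal cell. -/
def freeSymbols {r n : ℕ} (L : Fin r → Fin r → Fin n) (s : Fin n) (j : Fin r) : Finset (Fin n) :=
  (univ.image (L j))ᶜ.erase s

/-- Each of these must occur in the new row, or condition (i) fails for the bordered rectangle. -/
def tightSymbols {r n : ℕ} (L : Fin r → Fin r → Fin n) (d : Fin n → ℕ) (s : Fin n) :
    Finset (Fin n) :=
  {ℓ | ℓ ≠ s ∧ occ L ℓ + n = 2 * r + d ℓ}

/-- A matching of all `r + (n - r - 1)` indices uses every symbol but `s`; since the dummy indices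
avoid tight symbols, the rows take all of them. -/
def rowHallFamily {r n : ℕ} (L : Fin r → Fin r → Fin n) (d : Fin n → ℕ) (s : Fin n) :
    Fin r ⊕ Fin (n - r - 1) → Finset (Fin n) :=
  Sum.elim (freeSymbols L s) fun _ => (univ.erase s) \ tightSymbols L d s

section HallCondition

variable {r n : ℕ} {L : Fin r → Fin r → Fin n} {d : Fin n → ℕ} {s : Fin n}

lemma card_le_card_biUnion_freeSymbols (hL : IsSymLatinRect L) (hr : r < n)
    (h1 : ∀ ℓ, 2 * r + d ℓ ≤ occ L ℓ + n) (hs : d s ≠ 0) (S : Finset (Fin r)) :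
    #S ≤ #(S.biUnion (freeSymbols L s)) := by
  set N := S.biUnion (freeSymbols L s)
  have hcover : ∀ j ∈ S, ∀ ℓ, ℓ ∉ univ.image (L j) → ℓ ∈ insert s N := by
    intro j hj ℓ hℓ
    by_cases hℓs : ℓ = s
    · exact hℓs ▸ mem_insert_self s N
    · exact mem_insert_of_mem (mem_biUnion.2 ⟨j, hj, mem_erase.2 ⟨hℓs, mem_compl.2 hℓ⟩⟩)
  have hcount := sum_card_filter_le_sum_card_filter (fun j ℓ => ℓ ∉ univ.image (L j)) hcover
  simp only [hL.card_missing_from_row, sum_const, smul_eq_mul] at hcount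
  have hdeg : ∀ ℓ ∈ insert s N, #{j | ℓ ∉ univ.image (L j)} + d ℓ ≤ n - r := fun ℓ _ => by
    have := hL.card_rows_missing_add_occ ℓ; have := h1 ℓ; omega
  have hsum := sum_le_sum hdeg
  rw [sum_add_distrib, sum_const, smul_eq_mul] at hsum
  have hds : d s ≤ ∑ ℓ ∈ insert s N, d ℓ :=
    single_le_sum (fun _ _ => Nat.zero_le _) (mem_insert_self s N)
  have hcard := Nat.mul_le_mul_right (n - r) (card_insert_le s N)
  have : #S * (n - r) < (#N + 1) * (n - r) := by omega
  exact Nat.lt_succ_iff.1 (Nat.lt_of_mul_lt_mul_right this)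

lemma card_tightSymbols_sdiff_add_card_le (hL : IsSymLatinRect L) (hr : r < n) (hs : d s ≠ 0)
    (hd : ∑ ℓ, d ℓ = n - r) (S : Finset (Fin r)) :
    #(tightSymbols L d s \ S.biUnion (freeSymbols L s)) + #S ≤ r := by
  set P := tightSymbols L d s \ S.biUnion (freeSymbols L s)
  have hmemP : ∀ ℓ ∈ P, ℓ ≠ s ∧ occ L ℓ + n = 2 * r + d ℓ ∧ ℓ ∉ S.biUnion (freeSymbols L s) :=
    fun ℓ hℓ => by simpa [P, tightSymbols, and_assoc] using hℓ
  have hcover : ∀ ℓ ∈ P, ∀ j, ℓ ∉ univ.image (L j) → j ∈ Sᶜ := by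
    intro ℓ hℓ j hj
    obtain ⟨hℓs, -, hℓN⟩ := hmemP ℓ hℓ
    exact mem_compl.2 fun hjS => hℓN (mem_biUnion.2 ⟨j, hjS, mem_erase.2 ⟨hℓs, mem_compl.2 hj⟩⟩)
  have hcount := sum_card_filter_le_sum_card_filter (fun ℓ j => ℓ ∉ univ.image (L j)) hcover
  simp only [hL.card_missing_from_row, sum_const, smul_eq_mul] at hcount
  have hdeg : ∀ ℓ ∈ P, #{j | ℓ ∉ univ.image (L j)} + d ℓ = n - r := fun ℓ hℓ => by
    have := hL.card_rows_missing_add_occ ℓ; have := (hmemP ℓ hℓ).2.1; omega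
  have hsum := sum_congr rfl hdeg
  rw [sum_add_distrib, sum_const, smul_eq_mul] at hsum
  have hPd : d s + ∑ ℓ ∈ P, d ℓ ≤ n - r := by
    rw [← sum_insert fun hsP => (hmemP s hsP).1 rfl, ← hd]
    exact sum_le_sum_of_subset (subset_univ _)
  have hS : #Sᶜ + #S = r := by
    rw [card_compl, Fintype.card_fin]; have := card_le_univ S; rw [Fintype.card_fin] at this; omega
  have : #P * (n - r) < (#Sᶜ + 1) * (n - r) := by rw [add_one_mul]; omega
  have := Nat.lt_succ_iff.1 (Nat.lt_of_mul_lt_mul_right this)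
  omega

lemma card_le_card_biUnion_rowHallFamily (hL : IsSymLatinRect L) (hr : r < n)
    (h1 : ∀ ℓ, 2 * r + d ℓ ≤ occ L ℓ + n) (hs : d s ≠ 0) (hd : ∑ ℓ, d ℓ = n - r)
    (u : Finset (Fin r ⊕ Fin (n - r - 1))) : #u ≤ #(u.biUnion (rowHallFamily L d s)) := by
  set N := u.toLeft.biUnion (freeSymbols L s)
  set M := tightSymbols L d s
  have hN : N ⊆ u.biUnion (rowHallFamily L d s) := fun ℓ hℓ => by
    obtain ⟨j, hj, hℓj⟩ := mem_biUnion.1 hℓ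
    exact mem_biUnion.2 ⟨.inl j, mem_toLeft.1 hj, hℓj⟩
  have hu := card_toLeft_add_card_toRight (u := u)
  rcases u.toRight.eq_empty_or_nonempty with hR | ⟨z, hz⟩
  · rw [hR, card_empty, add_zero] at hu
    exact hu ▸ (card_le_card_biUnion_freeSymbols hL hr h1 hs _).trans (card_le_card hN)
  have hdummy : (univ.erase s) \ M ⊆ u.biUnion (rowHallFamily L d s) := fun ℓ hℓ =>
    mem_biUnion.2 ⟨.inr z, mem_toRight.1 hz, hℓ⟩
  have hsub : (univ.erase s \ M) ∪ (M ∩ N) ⊆ u.biUnion (rowHallFamily L d s) :=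
    union_subset hdummy (inter_subset_right.trans hN)
  have hunion := card_le_card hsub
  rw [card_union_of_disjoint (disjoint_sdiff_self_left.mono_right inter_subset_left)] at hunion
  have hM : #((univ.erase s) \ M) + #M = n - 1 := by
    rw [card_sdiff_add_card_eq_card fun ℓ hℓ => by simp_all [M, tightSymbols],
      card_erase_of_mem (mem_univ s), card_univ, Fintype.card_fin]
  have hMN := card_sdiff_add_card_inter M N
  have htight : #(M \ N) + #u.toLeft ≤ r :=
    card_tightSymbols_sdiff_add_card_le hL hr hs hd u.toLeft
  have hdummies : #u.toRight ≤ n - r - 1 := (card_le_univ _).trans_eq (Fintype.card_fin _)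
  omega

lemma exists_admissible_row (hL : IsSymLatinRect L) (hr : r < n)
    (h1 : ∀ ℓ, 2 * r + d ℓ ≤ occ L ℓ + n) (hs : d s ≠ 0) (hd : ∑ ℓ, d ℓ = n - r) :
    ∃ x : Fin r → Fin n, Function.Injective x ∧ (∀ j, x j ∈ freeSymbols L s j) ∧
      ∀ ℓ ∈ tightSymbols L d s, ℓ ∈ Set.range x := by
  obtain ⟨f, hf, hfF⟩ := (all_card_le_biUnion_card_iff_exists_injective _).1
    (card_le_card_biUnion_rowHallFamily hL hr h1 hs hd)
  refine ⟨f ∘ Sum.inl, hf.comp Sum.inl_injective, fun j => hfF (.inl j), fun ℓ hℓ => ?_⟩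
  have hsub : univ.image f ⊆ univ.erase s := by
    intro ℓ hℓ
    obtain ⟨z, -, rfl⟩ := mem_image.1 hℓ
    rcases z with j | k
    · exact erase_subset_erase s (subset_univ _) (hfF (.inl j))
    · exact sdiff_subset (hfF (.inr k))
  have himage : univ.image f = univ.erase s := by
    refine eq_of_subset_of_card_le hsub ?_
    rw [card_image_of_injective _ hf, card_erase_of_mem (mem_univ s)]
    simp only [card_univ, Fintype.card_sum, Fintype.card_fin]
    omega
  have hℓs : ℓ ≠ s := (mem_filter.1 hℓ).2.1
  obtain ⟨z, -, hz⟩ := mem_image.1 (himage ▸ mem_erase.2 ⟨hℓs, mem_univ ℓ⟩)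
  rcases z with j | k
  · exact ⟨j, hz⟩
  · exact absurd hℓ (mem_sdiff.1 (hz ▸ hfF (.inr k))).2

end HallCondition

def border {r n : ℕ} (L : Fin r → Fin r → Fin n) (x : Fin r → Fin n) (s : Fin n) :
    Fin (r + 1) → Fin (r + 1) → Fin n :=
  Fin.snoc (α := fun _ => Fin (r + 1) → Fin n) (fun i => Fin.snoc (L i) (x i)) (Fin.snoc x s)

section Border

variable {r n : ℕ} {L : Fin r → Fin r → Fin n} {x : Fin r → Fin n} {s : Fin n}

@[simp] lemma border_castSucc_castSucc (i j : Fin r) :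
    border L x s i.castSucc j.castSucc = L i j := by
  simp [border]

@[simp] lemma border_last_last : border L x s (Fin.last r) (Fin.last r) = s := by
  simp [border]

lemma IsSymLatinRect.border (hL : IsSymLatinRect L) (hx : Function.Injective x)
    (hfree : ∀ j, x j ∈ freeSymbols L s j) : IsSymLatinRect (_root_.border L x s) := by
  have hfree' : ∀ j, x j ≠ s ∧ x j ∉ Set.range (L j) := fun j => by
    simpa [freeSymbols] using hfree j
  have hsymm : ∀ i j, _root_.border L x s i j = _root_.border L x s j i := by
    intro i j
    induction i using Fin.lastCases <;> induction j using Fin.lastCases <;>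
      simp [_root_.border, hL.2.2]
  have hrow : ∀ i, Function.Injective (_root_.border L x s i) := by
    intro i
    induction i using Fin.lastCases with
    | last =>
      simpa [_root_.border] using
        Fin.snoc_injective_of_injective hx fun ⟨j, hj⟩ => (hfree' j).1 hj
    | cast i =>
      simpa [_root_.border] using Fin.snoc_injective_of_injective (hL.1 i) (hfree' i).2
  refine ⟨hrow, fun j => ?_, hsymm⟩
  simpa only [hsymm _ j] using hrow j

lemma occ_border (ℓ : Fin n) :
    occ (border L x s) ℓ = occ L ℓ + 2 * #{i | x i = ℓ} + if s = ℓ then 1 else 0 := by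
  simp only [occ_eq_sum_sum, Fin.sum_univ_castSucc, border, Fin.snoc_castSucc, Fin.snoc_last,
    sum_add_distrib, card_filter]
  ring

/-- Condition (i) survives the bordering: a tight symbol gains two occurrences, and a symbol with
slack has slack at least two by condition (ii). -/
lemma two_mul_add_update_le_occ_border {d : Fin n → ℕ} (h1 : ∀ ℓ, 2 * r + d ℓ ≤ occ L ℓ + n)
    (h2 : ∀ ℓ, (occ L ℓ + d ℓ) % 2 = n % 2)
    (hs : d s ≠ 0) (htight : ∀ ℓ ∈ tightSymbols L d s, ℓ ∈ Set.range x) (ℓ : Fin n) :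
    2 * (r + 1) + Function.update d s (d s - 1) ℓ ≤ occ (border L x s) ℓ + n := by
  rw [occ_border]
  rcases eq_or_ne ℓ s with rfl | hℓs
  · simp only [Function.update_self, if_true]
    have := h1 ℓ
    omega
  rw [Function.update_of_ne hℓs, if_neg hℓs.symm]
  by_cases hℓ : occ L ℓ + n = 2 * r + d ℓ
  · obtain ⟨j, hj⟩ := htight ℓ (by simp [tightSymbols, hℓs, hℓ])
    have : 0 < #{i | x i = ℓ} := card_pos.2 ⟨j, by simp [hj]⟩
    omega
  · have := h1 ℓ
    have := h2 ℓ
    omega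

lemma occ_border_add_update_mod_two {d : Fin n → ℕ} (h2 : ∀ ℓ, (occ L ℓ + d ℓ) % 2 = n % 2)
    (hs : d s ≠ 0) (ℓ : Fin n) :
    (occ (border L x s) ℓ + Function.update d s (d s - 1) ℓ) % 2 = n % 2 := by
  rw [occ_border]
  have := h2 ℓ
  rcases eq_or_ne ℓ s with rfl | hℓs
  · simp only [Function.update_self, if_true]
    omega
  · rw [Function.update_of_ne hℓs, if_neg hℓs.symm]
    omega

end Border

lemma sum_update_sub_one {n : ℕ} {d : Fin n → ℕ} {s : Fin n} (hs : d s ≠ 0) :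
    ∑ ℓ, Function.update d s (d s - 1) ℓ = ∑ ℓ, d ℓ - 1 := by
  rw [sum_update_of_mem (mem_univ s), ← add_sum_erase _ _ (mem_univ s), sdiff_singleton_eq_erase]
  omega

lemma diagTail_eq_diagTail_succ_add {n r : ℕ} (hr : r < n) (A : Fin n → Fin n → Fin n)
    (ℓ : Fin n) :
    diagTail r A ℓ = diagTail (r + 1) A ℓ + if A ⟨r, hr⟩ ⟨r, hr⟩ = ℓ then 1 else 0 := by
  have hlast : (if A ⟨r, hr⟩ ⟨r, hr⟩ = ℓ then 1 else 0)
      = ∑ i, if i = ⟨r, hr⟩ then (if A i i = ℓ then 1 else 0) else 0 :=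
    (Fintype.sum_ite_eq' (⟨r, hr⟩ : Fin n) fun i => if A i i = ℓ then 1 else 0).symm
  rw [diagTail, diagTail, card_filter, card_filter, hlast, ← sum_add_distrib]
  refine sum_congr rfl fun i _ => ?_
  rcases eq_or_ne i ⟨r, hr⟩ with rfl | hi
  · simp
  · have : (i : ℕ) ≠ r := fun h => hi (Fin.ext h)
    simp only [hi, if_false, add_zero]
    congr 1
    exact propext ⟨fun h => ⟨by omega, h.2⟩, fun h => ⟨by omega, h.2⟩⟩

lemma IsSymLatinRect.isSymLS {n : ℕ} {L : Fin n → Fin n → Fin n} (hL : IsSymLatinRect L) :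
    IsSymLS L :=
  ⟨fun i => Finite.injective_iff_bijective.1 (hL.1 i),
    fun j => Finite.injective_iff_bijective.1 (hL.2.1 j), hL.2.2⟩

theorem exists_symLS_extension {n r : ℕ} (hrn : r ≤ n) {L : Fin r → Fin r → Fin n}
    (hL : IsSymLatinRect L) {d : Fin n → ℕ} (hd : ∑ ℓ, d ℓ = n - r)
    (h1 : ∀ ℓ, 2 * r + d ℓ ≤ occ L ℓ + n) (h2 : ∀ ℓ, (occ L ℓ + d ℓ) % 2 = n % 2) :
    ∃ A : Fin n → Fin n → Fin n, IsSymLS A ∧ Extends hrn L A ∧ ∀ ℓ, diagTail r A ℓ = d ℓ := by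
  obtain rfl | hr := hrn.eq_or_lt
  · refine ⟨L, hL.isSymLS, fun i j => by simp, fun ℓ => ?_⟩
    rw [Nat.sub_self, sum_eq_zero_iff] at hd
    rw [hd ℓ (mem_univ ℓ), diagTail, card_eq_zero, filter_eq_empty_iff]
    exact fun i _ h => absurd i.isLt (not_lt.2 h.1)
  obtain ⟨s, hs⟩ : ∃ s, d s ≠ 0 := by
    by_contra! h
    simp only [h, sum_const_zero] at hd
    omega
  obtain ⟨x, hx, hfree, htight⟩ := exists_admissible_row hL hr h1 hs hd
  obtain ⟨A, hA, hext, hdiag⟩ := exists_symLS_extension hr (hL.border hx hfree)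
    (by rw [sum_update_sub_one hs, hd]; omega) (two_mul_add_update_le_occ_border h1 h2 hs htight)
    (occ_border_add_update_mod_two h2 hs)
  have hAs : A ⟨r, hr⟩ ⟨r, hr⟩ = s := (hext (Fin.last r) (Fin.last r)).trans border_last_last
  refine ⟨A, hA, fun i j => by simpa using hext i.castSucc j.castSucc, fun ℓ => ?_⟩
  rw [diagTail_eq_diagTail_succ_add hr, hdiag, hAs]
  rcases eq_or_ne ℓ s with rfl | hℓs
  · simp only [Function.update_self, if_true]
    omega
  · simp [hℓs, hℓs.symm]
termination_by n - r

/-- Andersen–Hoffman's theorem. -/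
theorem andersen_hoffman (n r : ℕ) (hrn : r ≤ n)
    (L : Fin r → Fin r → Fin n) (hL : IsSymLatinRect L)
    (d : Fin n → ℕ) (hd : ∑ ℓ, d ℓ = n - r) :
    (∃ A : Fin n → Fin n → Fin n, IsSymLS A ∧ Extends hrn L A ∧
        ∀ ℓ, diagTail r A ℓ = d ℓ) ↔
      (∀ ℓ, 2 * r + d ℓ ≤ occ L ℓ + n) ∧
      (∀ ℓ, (occ L ℓ + d ℓ) % 2 = n % 2) := by
  refine ⟨fun ⟨A, hA, hext, hdiag⟩ => ⟨fun ℓ => ?_, fun ℓ => ?_⟩,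
    fun ⟨h1, h2⟩ => exists_symLS_extension hrn hL hd h1 h2⟩
  · simpa [hdiag ℓ] using (hA.conditions_of_extends hrn hext ℓ).1
  · simpa [hdiag ℓ] using (hA.conditions_of_extends hrn hext ℓ).2
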